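/- arXiv:1912.02105 — 3 statements merged into one kernel-verified Lean document; each statement's English description precedes it below -/
import Mathlib

section
/- The reachability-based influence spread function f(S) = E[|{v : v reachable from S in the random live-edge subgraph}|] is submodular: for all S ⊆ T and any vertex v, f(S ∪ {v}) - f(S) ≥ f(T ∪ {v}) - f(T). -/
open Classical in
/-- Expected influence spread in the live-edge model: each edge `e ∈ E` is
independently present with probability `p e`, and `expectedSpread E p S` is the
expected number of vertices reachable from the seed set `S`. -/
noncomputable def expectedSpread {V : Type*} [Fintype V] [DecidableEq V]
    (E : Finset (V × V)) (p : V × V → ℝ) (S : Finset V) : ℝ :=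
  ∑ H ∈ E.powerset,
    (∏ e ∈ H, p e) * (∏ e ∈ E \ H, (1 - p e)) *
      ((Finset.univ.filter (fun v : V =>
        ∃ s ∈ S, Relation.ReflTransGen (fun a b => (a, b) ∈ H) s v)).card : ℝ)

/-!
For a fixed live-edge subgraph `H`, the set reachable from `S` is the union of the sets
reachable from its points, so `S ↦ #(liveReach H S)` is a coverage function; its marginal gains
decrease by submodularity of `Finset.card`. The expected spread is a combination of these
coverage functions with the nonnegative weights `liveEdgeProb E p H`, so it inherits this.
-/

open Finset

theorem Finset.card_union_add_card_le_of_subset {α : Type*} [DecidableEq α] {A B : Finset α}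
    (hAB : A ⊆ B) (C : Finset α) : #(B ∪ C) + #A ≤ #(A ∪ C) + #B := by
  have hA : A ⊆ (A ∪ C) ∩ B := subset_inter subset_union_left hAB
  have hB : (A ∪ C) ∪ B = B ∪ C := by
    rw [union_right_comm, union_eq_right.2 hAB]
  calc #(B ∪ C) + #A ≤ #((A ∪ C) ∪ B) + #((A ∪ C) ∩ B) := by
        rw [hB]; exact Nat.add_le_add_left (card_le_card hA) _
    _ = #(A ∪ C) + #B := card_union_add_card_inter _ _

section LiveEdge

variable {V : Type*}

open Classical in
noncomputable def liveReach [Fintype V] (H : Finset (V × V)) (S : Finset V) : Finset V :=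
  univ.filter fun x => ∃ s ∈ S, Relation.ReflTransGen (fun a b => (a, b) ∈ H) s x

theorem liveReach_union [Fintype V] [DecidableEq V] (H : Finset (V × V)) (S T : Finset V) :
    liveReach H (S ∪ T) = liveReach H S ∪ liveReach H T := by
  ext x
  simp only [liveReach, mem_filter, mem_univ, true_and, mem_union, or_and_right, exists_or]

theorem liveReach_mono [Fintype V] (H : Finset (V × V)) {S T : Finset V} (hST : S ⊆ T) :
    liveReach H S ⊆ liveReach H T := by
  intro x
  simp only [liveReach, mem_filter, mem_univ, true_and]
  exact fun ⟨s, hs, hsx⟩ => ⟨s, hST hs, hsx⟩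

def liveEdgeProb [DecidableEq V] (E : Finset (V × V)) (p : V × V → ℝ) (H : Finset (V × V)) : ℝ :=
  (∏ e ∈ H, p e) * ∏ e ∈ E \ H, (1 - p e)

theorem liveEdgeProb_nonneg [DecidableEq V] {E H : Finset (V × V)} {p : V × V → ℝ}
    (hp : ∀ e ∈ E, 0 ≤ p e ∧ p e ≤ 1) (hH : H ⊆ E) : 0 ≤ liveEdgeProb E p H :=
  mul_nonneg (prod_nonneg fun e he => (hp e (hH he)).1)
    (prod_nonneg fun e he => sub_nonneg.2 (hp e (mem_sdiff.1 he).1).2)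

theorem expectedSpread_eq_sum_liveEdgeProb_mul [Fintype V] [DecidableEq V]
    (E : Finset (V × V)) (p : V × V → ℝ) (S : Finset V) :
    expectedSpread E p S = ∑ H ∈ E.powerset, liveEdgeProb E p H * #(liveReach H S) :=
  rfl

end LiveEdge

/-- The reachability-based expected influence spread is submodular:
for `S ⊆ T` and any vertex `v`,
`f(S ∪ {v}) - f(S) ≥ f(T ∪ {v}) - f(T)`. -/
theorem expectedSpread_submodular {V : Type*} [Fintype V] [DecidableEq V]
    (E : Finset (V × V)) (p : V × V → ℝ) (hp : ∀ e ∈ E, 0 ≤ p e ∧ p e ≤ 1)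
    (S T : Finset V) (hST : S ⊆ T) (v : V) :
    expectedSpread E p (T ∪ {v}) - expectedSpread E p T ≤
      expectedSpread E p (S ∪ {v}) - expectedSpread E p S := by
  simp only [expectedSpread_eq_sum_liveEdgeProb_mul, ← sum_sub_distrib, ← mul_sub]
  refine sum_le_sum fun H hH =>
    mul_le_mul_of_nonneg_left ?_ (liveEdgeProb_nonneg hp (mem_powerset.1 hH))
  have hcover := card_union_add_card_le_of_subset (liveReach_mono H hST) (liveReach H {v})
  rw [liveReach_union, liveReach_union, sub_le_sub_iff]
  exact_mod_cast hcover
end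

section
/- A nonnegative monotone submodular function need not be adaptive submodular; more concretely, there exists an instance of an adaptive stochastic optimization problem over two items with binary states in which the expected marginal gain of an item conditioned on a longer observation history strictly exceeds its expected marginal gain under a sub-history, violating the adaptive submodularity inequality. -/
/-- A realization `φ` of item states is consistent with the partial realization
`ψ` (a set of item–state observations) if it agrees with every observation. -/
def Consistent (ψ : Finset (Fin 2 × Bool)) (φ : Fin 2 → Bool) : Prop :=
  ∀ q ∈ ψ, φ q.1 = q.2

instance (ψ : Finset (Fin 2 × Bool)) (φ : Fin 2 → Bool) :
    Decidable (Consistent ψ φ) := by unfold Consistent; infer_instance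

/-- The probability mass of the realizations consistent with `ψ` under `μ`. -/
def mass (μ : (Fin 2 → Bool) → ℝ) (ψ : Finset (Fin 2 × Bool)) : ℝ :=
  ∑ φ ∈ Finset.univ.filter (Consistent ψ), μ φ

/-- The domain (set of selected items) of a partial realization. -/
def dom (ψ : Finset (Fin 2 × Bool)) : Finset (Fin 2) := ψ.image Prod.fst

/-- The conditional expected marginal benefit `Δ(e | ψ)` of selecting item `e`
given the observations `ψ`. -/
noncomputable def marginal (μ : (Fin 2 → Bool) → ℝ)
    (f : Finset (Fin 2) → (Fin 2 → Bool) → ℝ)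
    (ψ : Finset (Fin 2 × Bool)) (e : Fin 2) : ℝ :=
  (∑ φ ∈ Finset.univ.filter (Consistent ψ),
      μ φ * (f (insert e (dom ψ)) φ - f (dom ψ) φ)) / mass μ ψ


/-! The objective counts the selected items whose state is `true`, so it is modular; the prior
makes the two states equal, each value with probability `1/2`. Before any observation item `1`
is `true` with probability `1/2`, but once item `0` has been seen in state `true`, item `1`
is `true` almost surely: its expected gain rises from `1/2` to `1`. -/

open Finset

section

variable {α : Type*}

lemma sum_insert_sub_sum [DecidableEq α] (w : α → ℝ) (S : Finset α) (x : α) :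
    ∑ j ∈ insert x S, w j - ∑ j ∈ S, w j = if x ∈ S then 0 else w x := by
  split_ifs with hx
  · rw [insert_eq_of_mem hx, sub_self]
  · rw [sum_insert hx, add_sub_cancel_right]

lemma sum_insert_sub_sum_antitone [DecidableEq α] {w : α → ℝ} (hw : 0 ≤ w) {S T : Finset α}
    (hST : S ⊆ T) (x : α) :
    ∑ j ∈ insert x T, w j - ∑ j ∈ T, w j ≤ ∑ j ∈ insert x S, w j - ∑ j ∈ S, w j := by
  rw [sum_insert_sub_sum, sum_insert_sub_sum]
  by_cases hxT : x ∈ T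
  · rw [if_pos hxT]
    split_ifs
    exacts [le_rfl, hw x]
  · rw [if_neg hxT, if_neg (fun hxS => hxT (hST hxS))]

def countTrue (S : Finset α) (φ : α → Bool) : ℝ :=
  ∑ j ∈ S, if φ j then 1 else 0

lemma countTrue_nonneg (S : Finset α) (φ : α → Bool) : 0 ≤ countTrue S φ :=
  sum_nonneg fun j _ => by split_ifs <;> norm_num

lemma countTrue_mono (φ : α → Bool) {S T : Finset α} (hST : S ⊆ T) :
    countTrue S φ ≤ countTrue T φ :=
  sum_le_sum_of_subset_of_nonneg hST fun j _ _ => by split_ifs <;> norm_num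

lemma countTrue_submodular [DecidableEq α] (φ : α → Bool) {S T : Finset α}
    (hST : S ⊆ T) (x : α) :
    countTrue (insert x T) φ - countTrue T φ ≤ countTrue (insert x S) φ - countTrue S φ :=
  sum_insert_sub_sum_antitone (fun j => by dsimp only; split_ifs <;> norm_num) hST x

end

lemma consistent_empty (φ : Fin 2 → Bool) : Consistent ∅ φ := by
  simp [Consistent]

lemma consistent_insert (q : Fin 2 × Bool) (ψ : Finset (Fin 2 × Bool)) (φ : Fin 2 → Bool) :
    Consistent (insert q ψ) φ ↔ φ q.1 = q.2 ∧ Consistent ψ φ := by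
  simp [Consistent]

lemma consistent_singleton (q : Fin 2 × Bool) (φ : Fin 2 → Bool) :
    Consistent {q} φ ↔ φ q.1 = q.2 := by
  simp [Consistent]

lemma marginal_countTrue (μ : (Fin 2 → Bool) → ℝ) {ψ : Finset (Fin 2 × Bool)} {e : Fin 2}
    (he : e ∉ dom ψ) :
    marginal μ countTrue ψ e = mass μ (insert (e, true) ψ) / mass μ ψ := by
  have hgain (φ : Fin 2 → Bool) :
      countTrue (insert e (dom ψ)) φ - countTrue (dom ψ) φ = if φ e then 1 else 0 := by
    rw [countTrue, countTrue, sum_insert_sub_sum, if_neg he]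
  simp only [marginal, mass, hgain, mul_ite, mul_one, mul_zero, ← sum_filter, filter_filter,
    consistent_insert, and_comm]

noncomputable def correlatedPrior (φ : Fin 2 → Bool) : ℝ :=
  if φ 0 = φ 1 then 1 / 2 else 0

lemma sum_fin_two_bool (g : (Fin 2 → Bool) → ℝ) :
    ∑ φ : Fin 2 → Bool, g φ =
      g ![false, false] + g ![false, true] + g ![true, false] + g ![true, true] := by
  rw [← Equiv.sum_comp (finTwoArrowEquiv Bool).symm g, Fintype.sum_prod_type]
  simp [finTwoArrowEquiv]
  ring

lemma mass_correlatedPrior (ψ : Finset (Fin 2 × Bool)) :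
    mass correlatedPrior ψ =
      (if Consistent ψ ![false, false] then 1 / 2 else 0) +
        if Consistent ψ ![true, true] then 1 / 2 else 0 := by
  rw [mass, sum_filter, sum_fin_two_bool]
  simp [correlatedPrior]

/-- A nonnegative monotone submodular objective need not be adaptive submodular:
there is a finite probability space over the binary states of two items, a
pointwise nonnegative, monotone, submodular objective `f`, partial realizations
`ψ ⊆ ψ'` (each observing each item at most once) with positive probability mass,
and an item `e` with `Δ(e | ψ') > Δ(e | ψ)`, violating adaptive submodularity. -/
theorem not_adaptive_submodular :
    ∃ (μ : (Fin 2 → Bool) → ℝ) (f : Finset (Fin 2) → (Fin 2 → Bool) → ℝ)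
      (ψ ψ' : Finset (Fin 2 × Bool)) (e : Fin 2),
      (∀ φ, 0 ≤ μ φ) ∧ (∑ φ : Fin 2 → Bool, μ φ) = 1 ∧
      (∀ S φ, 0 ≤ f S φ) ∧
      (∀ φ, ∀ S T : Finset (Fin 2), S ⊆ T → f S φ ≤ f T φ) ∧
      (∀ φ, ∀ S T : Finset (Fin 2), S ⊆ T → ∀ x,
        f (insert x T) φ - f T φ ≤ f (insert x S) φ - f S φ) ∧
      ψ ⊆ ψ' ∧
      (∀ q ∈ ψ', ∀ q' ∈ ψ', q.1 = q'.1 → q = q') ∧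
      0 < mass μ ψ ∧ 0 < mass μ ψ' ∧
      marginal μ f ψ e < marginal μ f ψ' e := by
  have hψ : mass correlatedPrior ∅ = 1 := by
    norm_num [mass_correlatedPrior, consistent_empty]
  have hψ' : mass correlatedPrior {(0, true)} = 1 / 2 := by
    norm_num [mass_correlatedPrior, consistent_singleton]
  have hgain :
      marginal correlatedPrior countTrue ∅ 1 < marginal correlatedPrior countTrue {(0, true)} 1 := by
    rw [marginal_countTrue _ (by decide), marginal_countTrue _ (by decide), hψ, hψ']
    norm_num [mass_correlatedPrior, consistent_insert, consistent_singleton]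
  refine ⟨correlatedPrior, countTrue, ∅, {(0, true)}, 1, fun φ => ?_, ?_, countTrue_nonneg,
    fun φ _ _ => countTrue_mono φ, fun φ _ _ => countTrue_submodular φ, empty_subset _,
    fun q hq q' hq' _ => (mem_singleton.1 hq).trans (mem_singleton.1 hq').symm,
    by rw [hψ]; norm_num, by rw [hψ']; norm_num, hgain⟩
  · unfold correlatedPrior; split_ifs <;> norm_num
  · simpa [mass, consistent_empty] using hψ
end

section
/- Greedy maximization of a monotone submodular set function f with f(∅) = 0 under a cardinality constraint K achieves value at least (1 - (1 - 1/K)^K) · OPT ≥ (1 - 1/e) · OPT. -/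
/-!
By submodularity, the gain of adding all of `T` to the current greedy set `Sᵢ` is at most the sum
of the `|T| = K` single-element gains, each of which is at most the greedy gain. Hence the gap
`f T - f Sᵢ` shrinks by a factor `1 - 1/K` at every step, so after `K` steps it is at most
`(1 - 1/K)^K f T ≤ f T / e`.
-/

open Finset

section Submodular

variable {V : Type*} [DecidableEq V] {f : Finset V → ℝ}

theorem sub_le_sum_marginal_gain
    (hsub : ∀ S T : Finset V, S ⊆ T → ∀ x, f (insert x T) - f T ≤ f (insert x S) - f S)
    (S A : Finset V) : f (S ∪ A) - f S ≤ ∑ x ∈ A, (f (insert x S) - f S) := by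
  induction A using Finset.induction_on with
  | empty => simp
  | insert a A ha ih =>
    rw [union_insert, sum_insert ha]
    linarith [hsub S (S ∪ A) subset_union_left a]

theorem sub_le_card_mul_of_greedy (hmono : Monotone f)
    (hsub : ∀ S T : Finset V, S ⊆ T → ∀ x, f (insert x T) - f T ≤ f (insert x S) - f S)
    {S S' T : Finset V} (hgreedy : ∀ y, f (insert y S) ≤ f S') :
    f T - f S ≤ #T * (f S' - f S) :=
  calc f T - f S ≤ f (S ∪ T) - f S := by linarith [hmono (subset_union_right (s₁ := S) (s₂ := T))]
    _ ≤ ∑ y ∈ T, (f (insert y S) - f S) := sub_le_sum_marginal_gain hsub S T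
    _ ≤ #T * (f S' - f S) := by
      rw [← nsmul_eq_mul]
      exact sum_le_card_nsmul _ _ _ fun y _ => by linarith [hgreedy y]

theorem sub_le_one_sub_inv_card_mul_of_greedy (hmono : Monotone f)
    (hsub : ∀ S T : Finset V, S ⊆ T → ∀ x, f (insert x T) - f T ≤ f (insert x S) - f S)
    {S S' T : Finset V} (hT : T.Nonempty) (hgreedy : ∀ y, f (insert y S) ≤ f S') :
    f T - f S' ≤ (1 - 1 / #T) * (f T - f S) := by
  have hcard : (0 : ℝ) < #T := by exact_mod_cast hT.card_pos
  have := sub_le_card_mul_of_greedy hmono hsub (T := T) hgreedy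
  rw [one_sub_mul, le_sub_iff_add_le, ← le_sub_iff_add_le', div_mul_eq_mul_div, div_le_iff₀ hcard]
  linarith

end Submodular

theorem greedy_submodular_guarantee_general {V : Type*} [DecidableEq V]
    (f : Finset V → ℝ) (K : ℕ)
    (hmono : ∀ S T : Finset V, S ⊆ T → f S ≤ f T)
    (hsub : ∀ S T : Finset V, S ⊆ T → ∀ x,
      f (insert x T) - f T ≤ f (insert x S) - f S)
    (hempty : f ∅ = 0)
    (S : ℕ → Finset V) (hS0 : S 0 = ∅)
    (hgreedy : ∀ i < K, ∃ x ∉ S i, S (i + 1) = insert x (S i) ∧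
      ∀ y : V, f (insert y (S i)) ≤ f (S (i + 1))) :
    ∀ T : Finset V, T.card = K →
      (1 - (1 - 1 / (K : ℝ)) ^ K) * f T ≤ f (S K) ∧
      (1 - 1 / Real.exp 1) * f T ≤ f (S K) := by
  intro T hT
  obtain rfl | hK := K.eq_zero_or_pos
  · simp [card_eq_zero.1 hT, hS0, hempty]
  have hq : 0 ≤ 1 - 1 / (K : ℝ) :=
    sub_nonneg.2 (div_le_one_of_le₀ (by exact_mod_cast hK) (Nat.cast_nonneg K))
  have hgap : f T - f (S K) ≤ (1 - 1 / (K : ℝ)) ^ K * (f T - f (S 0)) :=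
    le_geom (u := fun i => f T - f (S i)) hq K fun i hi => by
      obtain ⟨-, -, -, hmax⟩ := hgreedy i hi
      rw [← hT]
      exact sub_le_one_sub_inv_card_mul_of_greedy hmono hsub (card_pos.1 (by omega)) hmax
  rw [hS0, hempty, sub_zero] at hgap
  have hexp : (1 - 1 / (K : ℝ)) ^ K ≤ 1 / Real.exp 1 := by
    rw [one_div (Real.exp 1), ← Real.exp_neg]
    exact Real.one_sub_div_pow_le_exp_neg (by exact_mod_cast hK)
  have hfT : 0 ≤ f T := hempty ▸ hmono ∅ T (empty_subset T)
  exact ⟨by linarith, by nlinarith⟩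

/-- Greedy maximization of a monotone submodular set function `f` with
`f ∅ = 0` under a cardinality constraint `K`: if `S 0 = ∅` and at each of the
first `K` steps the greedy algorithm adds a new element of maximum marginal
gain, then `f (S K) ≥ (1 - (1 - 1/K)^K) · f T ≥ (1 - 1/e) · f T` for every
`K`-element set `T` (in particular for an optimal one). -/
theorem greedy_submodular_guarantee {V : Type*} [Fintype V] [DecidableEq V]
    (f : Finset V → ℝ) (K : ℕ) (hK : 1 ≤ K)
    (hmono : ∀ S T : Finset V, S ⊆ T → f S ≤ f T)
    (hsub : ∀ S T : Finset V, S ⊆ T → ∀ x,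
      f (insert x T) - f T ≤ f (insert x S) - f S)
    (hempty : f ∅ = 0)
    (S : ℕ → Finset V) (hS0 : S 0 = ∅)
    (hgreedy : ∀ i < K, ∃ x ∉ S i, S (i + 1) = insert x (S i) ∧
      ∀ y : V, f (insert y (S i)) ≤ f (S (i + 1))) :
    ∀ T : Finset V, T.card = K →
      (1 - (1 - 1 / (K : ℝ)) ^ K) * f T ≤ f (S K) ∧
      (1 - 1 / Real.exp 1) * f T ≤ f (S K) :=
  greedy_submodular_guarantee_general f K hmono hsub hempty S hS0 hgreedy
end
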